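/- Assume (A1)–(A7). Let F(θ) := inf over ℤⁿ-periodic φ ∈ C²(ℝⁿ,ℝ) of sup_{x} [H(x, ∇φ(x), θ) − Δφ(x)]. Fix c ∈ ℝ, set I(c) := {θ : F(θ) = c}, and suppose that for each θ ∈ I(c) we are given a ℤⁿ-periodic u_θ ∈ C²(ℝⁿ,ℝ) with H(x, ∇u_θ(x), θ) = c + Δu_θ(x) for all x ∈ ℝⁿ. If there exist θ ∈ I(c) and x ∈ ℝⁿ with ∂_θH(x, ∇u_θ(x), θ) > 0, then I(c) is a singleton. -/

import Mathlib

open Filter MeasureTheory Set Real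

noncomputable section

/-- `ℝⁿ` with the Euclidean structure. -/
abbrev Euc (n : ℕ) : Type := EuclideanSpace ℝ (Fin n)

/-- A function on `ℝⁿ` is `ℤⁿ`-periodic. -/
def ZnPeriodic {n : ℕ} (f : Euc n → ℝ) : Prop :=
  ∀ (x : Euc n) (k : Fin n → ℤ), f (x + (show Euc n from WithLp.toLp 2 fun i => (k i : ℝ))) = f x

/-- The Hamiltonian `H(x,p,θ)` is `ℤⁿ`-periodic in `x`. -/
def ZnPeriodicH {n : ℕ} (H : Euc n → Euc n → ℝ → ℝ) : Prop :=
  ∀ (x : Euc n) (k : Fin n → ℤ) (p : Euc n) (θ : ℝ),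
    H (x + (show Euc n from WithLp.toLp 2 fun i => (k i : ℝ))) p θ = H x p θ

/-- The Laplacian of `u : ℝⁿ → ℝ`, as the trace of the second derivative. -/
def lap {n : ℕ} (u : Euc n → ℝ) (x : Euc n) : ℝ :=
  ∑ i : Fin n, iteratedFDeriv ℝ 2 u x ![EuclideanSpace.single i 1, EuclideanSpace.single i 1]

/-- The viscous effective Hamiltonian `H̄(0,θ)`, via its inf–sup (min–max) representation:
`F(θ) = inf over ℤⁿ-periodic C² φ of sup_x [H(x,∇φ(x),θ) − Δφ(x)]`. -/
def effHvisc {n : ℕ} (H : Euc n → Euc n → ℝ → ℝ) (θ : ℝ) : ℝ :=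
  ⨅ φ : {φ : Euc n → ℝ // ContDiff ℝ 2 φ ∧ ZnPeriodic φ},
    ⨆ x : Euc n, (H x (gradient φ.1 x) θ - lap φ.1 x)

section AuxSMP
open RealInnerProductSpace

lemma lap_sub {n : ℕ} {u v : Euc n → ℝ} (hu : ContDiff ℝ 2 u) (hv : ContDiff ℝ 2 v) (x : Euc n) :
    lap (fun y => u y - v y) x = lap u x - lap v x := by
  unfold lap
  rw [← Finset.sum_sub_distrib]
  congr 1; ext i
  rw [show (fun y => u y - v y) = u + -v from funext fun y => sub_eq_add_neg _ _,
    iteratedFDeriv_add_apply hu.contDiffAt (show ContDiff ℝ 2 (-v) from hv.neg).contDiffAt,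
    iteratedFDeriv_neg_apply]
  simp [sub_eq_add_neg]

lemma gradient_sub' {n : ℕ} {u v : Euc n → ℝ} (hu : ContDiff ℝ 2 u) (hv : ContDiff ℝ 2 v) (x : Euc n) :
    gradient (fun y => u y - v y) x = gradient u x - gradient v x := by
  unfold gradient
  rw [fderiv_fun_sub (hu.differentiable two_ne_zero x) (hv.differentiable two_ne_zero x), map_sub]

lemma periodic_max {n : ℕ} {w : Euc n → ℝ} (hc : Continuous w) (hp : ZnPeriodic w) :
    ∃ x0, IsMaxOn w Set.univ x0 := by
  have hK : IsCompact {x : Euc n | ∀ i, x i ∈ Icc (0:ℝ) 1} := by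
    have : {x : Euc n | ∀ i, x i ∈ Icc (0:ℝ) 1}
        = (EuclideanSpace.equiv (Fin n) ℝ).toHomeomorph ⁻¹' (Set.pi Set.univ fun _ => Icc (0:ℝ) 1) := by
      ext x; simp [Set.mem_pi, Pi.le_def, forall_and]
    rw [this, Homeomorph.isCompact_preimage]
    exact isCompact_univ_pi fun _ => isCompact_Icc
  have hne : {x : Euc n | ∀ i, x i ∈ Icc (0:ℝ) 1}.Nonempty := ⟨0, fun i => by simp⟩
  obtain ⟨x0, hx0K, hx0⟩ := hK.exists_isMaxOn hne hc.continuousOn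
  refine ⟨x0, fun x _ => ?_⟩
  set k : Fin n → ℤ := fun i => -⌊x i⌋ with hk
  have hxk : (x + (show Euc n from WithLp.toLp 2 fun i => (k i : ℝ))) ∈ {x : Euc n | ∀ i, x i ∈ Icc (0:ℝ) 1} := by
    intro i
    have hco : (x + (show Euc n from WithLp.toLp 2 fun i => (k i : ℝ))) i = x i - (⌊x i⌋ : ℝ) := by
      have : (x + (show Euc n from WithLp.toLp 2 fun i => (k i : ℝ))) i = x i + ((k i : ℝ)) := rfl
      rw [this, hk]; push_cast; ring
    rw [hco]
    constructor
    · linarith [Int.floor_le (x i)]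
    · linarith [Int.lt_floor_add_one (x i)]
  calc w x = w (x + (show Euc n from WithLp.toLp 2 fun i => (k i : ℝ))) := (hp x k).symm
    _ ≤ w x0 := hx0 hxk



-- convexity gradient inequality
lemma convex_grad_ineq {E : Type*} [NormedAddCommGroup E] [NormedSpace ℝ E]
    {f : E → ℝ} (hf : ConvexOn ℝ Set.univ f) {a : E} {L : E →L[ℝ] ℝ}
    (hL : HasFDerivAt f L a) (b : E) : f a + L (b - a) ≤ f b := by
  set g : ℝ → ℝ := fun t => f (a + t • (b - a)) with hgdef
  have hline : ∀ t : ℝ, HasDerivAt (fun s : ℝ => a + s • (b - a)) (b - a) t := by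
    intro t
    simpa using ((hasDerivAt_id t).smul_const (b - a)).const_add a
  have hL' : HasFDerivAt f L ((fun s : ℝ => a + s • (b - a)) 0) := by simpa using hL
  have hg' : HasDerivAt g (L (b - a)) 0 := hL'.comp_hasDerivAt 0 (hline 0)
  have hgc : ConvexOn ℝ Set.univ g := by
    have := hf.comp_affineMap (AffineMap.lineMap a b : ℝ →ᵃ[ℝ] E)
    rw [Set.preimage_univ] at this
    have heq : g = f ∘ (AffineMap.lineMap a b : ℝ →ᵃ[ℝ] E) := by
      ext t
      simp only [Function.comp_apply, AffineMap.lineMap_apply, vsub_eq_sub, vadd_eq_add, hgdef]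
      exact congrArg f (add_comm _ _)
    rw [heq]; exact this
  have hs := hgc.le_slope_of_hasDerivAt (Set.mem_univ 0) (Set.mem_univ 1) zero_lt_one hg'
  have h0 : g 0 = f a := by simp [hgdef]
  have h1 : g 1 = f b := by simp [hgdef]
  rw [slope_def_field] at hs
  simp [h0, h1] at hs
  have hmap : L (b - a) = L b - L a := map_sub L b a
  linarith

-- monotone from nonneg derivative
lemma mono_of_hasDeriv {f f' : ℝ → ℝ} (hd : ∀ t, HasDerivAt f (f' t) t)
    (h0 : ∀ t, 0 ≤ f' t) : Monotone f := by
  apply monotone_of_deriv_nonneg (fun t => (hd t).differentiableAt)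
  intro t
  rw [(hd t).deriv]
  exact h0 t

-- endpoint derivative of monotone function constant on interval
lemma endpoint_deriv_zero {f : ℝ → ℝ} {θ1 θ2 : ℝ} (h12 : θ1 < θ2)
    (hmono : Monotone f) (heq : f θ1 = f θ2) {θ : ℝ} (hθ : θ = θ1 ∨ θ = θ2)
    {d : ℝ} (hd : HasDerivAt f d θ) : d = 0 := by
  have hconst : ∀ t ∈ Icc θ1 θ2, f t = f θ1 := by
    intro t ht
    have h1 := hmono ht.1
    have h2 := hmono ht.2
    rw [← heq] at h2
    linarith
  have hmem : θ ∈ Icc θ1 θ2 := by rcases hθ with h | h <;> simp [h, le_of_lt h12]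
  have hud : UniqueDiffWithinAt ℝ (Icc θ1 θ2) θ := uniqueDiffOn_Icc h12 θ hmem
  have hzero : HasDerivWithinAt f 0 (Icc θ1 θ2) θ := by
    have : HasDerivWithinAt (fun _ => f θ1) 0 (Icc θ1 θ2) θ := (hasDerivWithinAt_const _ _ _)
    exact this.congr hconst (hconst θ hmem)
  have h1 := hd.hasDerivWithinAt (s := Icc θ1 θ2)
  rw [← h1.derivWithin hud, ← hzero.derivWithin hud]



lemma second_deriv_nonpos {g : ℝ → ℝ} (hg : ContDiff ℝ 2 g) (hmax : IsLocalMax g 0) :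
    deriv (deriv g) 0 ≤ 0 := by
  by_contra hpos
  push_neg at hpos
  have hg2 : ContDiff ℝ 1 (deriv g) := by
    have := (contDiff_succ_iff_deriv (n := 1)).mp (by exact_mod_cast hg)
    exact this.2.2
  have hgdiff : Differentiable ℝ g := hg.differentiable two_ne_zero
  have hg'diff : Differentiable ℝ (deriv g) := hg2.differentiable one_ne_zero
  have hcont : Continuous (deriv (deriv g)) := by
    have := contDiff_one_iff_deriv.mp hg2
    exact this.2
  have h0 : deriv g 0 = 0 := hmax.deriv_eq_zero
  -- find η with deriv (deriv g) > 0 on ball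
  have hev : ∀ᶠ t in nhds (0:ℝ), 0 < deriv (deriv g) t :=
    continuousAt_const.eventually_lt hcont.continuousAt (by simpa using hpos)
  obtain ⟨η, hη, hball⟩ := Metric.eventually_nhds_iff_ball.mp hev
  -- deriv g strictly monotone on Icc 0 η', with η' = η/2
  set η' := η / 2 with hη'
  have hη'pos : 0 < η' := by positivity
  have hsub : Icc (0:ℝ) η' ⊆ Metric.ball (0:ℝ) η := by
    intro t ht
    rcases ht with ⟨h1, h2⟩
    rw [Metric.mem_ball, Real.dist_eq, sub_zero, abs_lt]
    constructor <;> linarith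
  have hmono1 : StrictMonoOn (deriv g) (Icc (0:ℝ) η') := by
    apply strictMonoOn_of_deriv_pos (convex_Icc _ _) (hg'diff.continuous.continuousOn)
    intro t ht
    rw [interior_Icc] at ht
    exact hball _ (hsub ⟨ht.1.le, ht.2.le⟩)
  have hderivpos : ∀ t ∈ Ioo (0:ℝ) η', 0 < deriv g t := by
    intro t ht
    have := hmono1 (Set.left_mem_Icc.2 hη'pos.le) ⟨ht.1.le, ht.2.le⟩ ht.1
    rwa [h0] at this
  have hmono2 : StrictMonoOn g (Icc (0:ℝ) η') := by
    apply strictMonoOn_of_deriv_pos (convex_Icc _ _) (hgdiff.continuous.continuousOn)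
    intro t ht
    rw [interior_Icc] at ht
    exact hderivpos t ht
  -- contradiction with local max
  obtain ⟨δ, hδ, hloc⟩ := Metric.eventually_nhds_iff_ball.mp hmax
  set t0 := min η' δ / 2 with ht0
  have ht0pos : 0 < t0 := by positivity
  have h1 : g 0 < g t0 := by
    apply hmono2 (Set.left_mem_Icc.2 hη'pos.le) _ ht0pos
    constructor
    · exact ht0pos.le
    · have : t0 ≤ η' / 2 := by
        rw [ht0]
        have := min_le_left η' δ
        linarith
      linarith
  have h2 : g t0 ≤ g 0 := by
    apply hloc
    rw [Metric.mem_ball, Real.dist_eq, sub_zero, abs_of_pos ht0pos]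
    have : t0 ≤ δ / 2 := by
      rw [ht0]
      have := min_le_right η' δ
      linarith
    linarith
  linarith



lemma dir_second_deriv {n : ℕ} {v : Euc n → ℝ} (hv : ContDiff ℝ 2 v) (ξ e : Euc n) :
    deriv (deriv (fun t : ℝ => v (ξ + t • e))) 0 = fderiv ℝ (fderiv ℝ v) ξ e e := by
  have hline : ∀ t : ℝ, HasDerivAt (fun s : ℝ => ξ + s • e) e t := by
    intro t; simpa using ((hasDerivAt_id t).smul_const e).const_add ξ
  have hvd : Differentiable ℝ v := hv.differentiable two_ne_zero
  have hfd : ∀ t : ℝ, deriv (fun s : ℝ => v (ξ + s • e)) t = fderiv ℝ v (ξ + t • e) e := by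
    intro t
    have h1 : HasFDerivAt v (fderiv ℝ v ((fun s : ℝ => ξ + s • e) t)) ((fun s : ℝ => ξ + s • e) t) :=
      (hvd _).hasFDerivAt
    exact (h1.comp_hasDerivAt t (hline t)).deriv
  rw [funext hfd]
  -- second derivative
  have hD : ContDiff ℝ 1 (fderiv ℝ v) := hv.fderiv_right (le_refl _)
  have hF : HasFDerivAt (fderiv ℝ v) (fderiv ℝ (fderiv ℝ v) ξ) ξ :=
    ((hD.differentiable one_ne_zero) ξ).hasFDerivAt
  have happ : HasFDerivAt (fun y => fderiv ℝ v y e)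
      ((ContinuousLinearMap.apply ℝ ℝ e).comp (fderiv ℝ (fderiv ℝ v) ξ)) ξ :=
    (ContinuousLinearMap.apply ℝ ℝ e).hasFDerivAt.comp ξ hF
  have happ' : HasFDerivAt (fun y => fderiv ℝ v y e)
      ((ContinuousLinearMap.apply ℝ ℝ e).comp (fderiv ℝ (fderiv ℝ v) ξ))
      ((fun s : ℝ => ξ + s • e) 0) := by simpa using happ
  have := (happ'.comp_hasDerivAt 0 (hline 0)).deriv
  rw [show (fun t : ℝ => fderiv ℝ v (ξ + t • e) e)
      = (fun y => fderiv ℝ v y e) ∘ (fun s : ℝ => ξ + s • e) from rfl, this]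
  simp

lemma localmax_dir_nonpos {n : ℕ} {v : Euc n → ℝ} (hv : ContDiff ℝ 2 v) {ξ : Euc n}
    (h : IsLocalMax v ξ) (e : Euc n) : fderiv ℝ (fderiv ℝ v) ξ e e ≤ 0 := by
  rw [← dir_second_deriv hv ξ e]
  apply second_deriv_nonpos
  · exact hv.comp (by
      apply ContDiff.add contDiff_const
      exact contDiff_id.smul contDiff_const)
  · have : Tendsto (fun t : ℝ => ξ + t • e) (nhds 0) (nhds ξ) := by
      have : Continuous (fun t : ℝ => ξ + t • e) := by continuity
      have h2 := this.tendsto 0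
      simpa using h2
    have h' : IsMaxFilter v (nhds ((fun t : ℝ => ξ + t • e) 0)) ((fun t : ℝ => ξ + t • e) 0) := by
      simp only [zero_smul, add_zero]; exact h
    have h2 := IsMaxFilter.comp_tendsto (g := fun t : ℝ => ξ + t • e) (b := (0:ℝ)) h'
      (by simpa using this)
    exact h2

lemma lap_nonpos_at_localmax {n : ℕ} {v : Euc n → ℝ} (hv : ContDiff ℝ 2 v) {ξ : Euc n}
    (h : IsLocalMax v ξ) : lap v ξ ≤ 0 := by
  unfold lap
  apply Finset.sum_nonpos
  intro i _
  rw [iteratedFDeriv_two_apply]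
  simpa using localmax_dir_nonpos hv h (EuclideanSpace.single i 1)
open RealInnerProductSpace




section barrier
variable {n : ℕ} (z : Euc n) (α : ℝ)

def barr (x : Euc n) : ℝ := Real.exp (-α * ⟪x - z, x - z⟫)

lemma hasFDerivAt_Q (x : Euc n) :
    HasFDerivAt (fun y : Euc n => ⟪y - z, y - z⟫) ((2:ℝ) • innerSL ℝ (x - z)) x := by
  have h1 : HasFDerivAt (fun y : Euc n => y - z) (ContinuousLinearMap.id ℝ (Euc n)) x :=
    (hasFDerivAt_id x).sub_const z
  have := h1.inner ℝ h1
  refine this.congr_fderiv ?_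
  ext e
  simp only [ContinuousLinearMap.smul_apply, ContinuousLinearMap.comp_apply,
    ContinuousLinearMap.prod_apply, ContinuousLinearMap.coe_id', id_eq, fderivInnerCLM_apply,
    smul_eq_mul, innerSL_apply_apply]
  rw [real_inner_comm e (x - z)]
  ring

lemma hasFDerivAt_barr (x : Euc n) :
    HasFDerivAt (barr z α)
      ((-2 * α * Real.exp (-α * ⟪x - z, x - z⟫)) • innerSL ℝ (x - z)) x := by
  have h1 := (hasFDerivAt_Q z x).const_mul (-α)
  have h2 := h1.exp
  refine h2.congr_fderiv ?_
  ext e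
  simp [barr]
  ring

lemma fderiv_barr : fderiv ℝ (barr z α)
    = fun x => (-2 * α * Real.exp (-α * ⟪x - z, x - z⟫)) • innerSL ℝ (x - z) :=
  funext fun x => (hasFDerivAt_barr z α x).fderiv

lemma gradient_barr (x : Euc n) : gradient (barr z α) x
    = (-2 * α * Real.exp (-α * ⟪x - z, x - z⟫)) • (x - z) := by
  unfold gradient
  rw [fderiv_barr ]
  rw [_root_.map_smul]
  congr 1
  have : innerSL ℝ (x - z) = InnerProductSpace.toDual ℝ (Euc n) (x - z) := rfl
  rw [this, LinearIsometryEquiv.symm_apply_apply]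

lemma contDiff_barr : ContDiff ℝ 2 (barr z α) := by
  apply ContDiff.exp
  exact contDiff_const.mul (ContDiff.inner (𝕜 := ℝ) (contDiff_id.sub contDiff_const)
    (contDiff_id.sub contDiff_const))

lemma second_barr (x : Euc n) (e₁ e₂ : Euc n) :
    fderiv ℝ (fderiv ℝ (barr z α)) x e₁ e₂ =
      Real.exp (-α * ⟪x - z, x - z⟫) *
        (4 * α^2 * ⟪x - z, e₁⟫ * ⟪x - z, e₂⟫ - 2 * α * ⟪e₁, e₂⟫) := by
  rw [fderiv_barr]
  set c : Euc n → ℝ := fun x => -2 * α * Real.exp (-α * ⟪x - z, x - z⟫) with hc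
  have hcd : HasFDerivAt c ((-2 * α * (-α) * Real.exp (-α * ⟪x - z, x - z⟫)) •
      ((2:ℝ) • innerSL ℝ (x - z))) x := by
    have h1 := ((hasFDerivAt_Q z x).const_mul (-α)).exp
    have h2 := h1.const_mul (-2 * α)
    refine h2.congr_fderiv ?_
    ext e
    simp
    ring
  have hGd : HasFDerivAt (fun y : Euc n => innerSL ℝ (y - z)) (innerSL ℝ (E := Euc n)) x := by
    have : (fun y : Euc n => innerSL ℝ (y - z)) = fun y => innerSL ℝ y - innerSL ℝ z :=
      funext fun y => map_sub _ y z
    rw [this]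
    exact (innerSL ℝ (E := Euc n)).hasFDerivAt.sub_const (innerSL ℝ z)
  have hprod := hcd.fun_smul hGd
  rw [hprod.fderiv]
  simp only [ContinuousLinearMap.add_apply, ContinuousLinearMap.smul_apply,
    ContinuousLinearMap.smulRight_apply, innerSL_apply_apply, smul_eq_mul, c]
  have hi : (innerSL ℝ e₁) e₂ = ⟪e₁, e₂⟫ := rfl
  erw [hi]
  ring
end barrier

lemma lap_barr {n : ℕ} (z : Euc n) (α : ℝ) (x : Euc n) :
    lap (barr z α) x =
      Real.exp (-α * ⟪x - z, x - z⟫) * (4 * α^2 * ⟪x - z, x - z⟫ - 2 * α * n) := by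
  unfold lap
  have hterm : ∀ i : Fin n,
      iteratedFDeriv ℝ 2 (barr z α) x ![EuclideanSpace.single i 1, EuclideanSpace.single i 1]
      = Real.exp (-α * ⟪x - z, x - z⟫) *
          (4 * α^2 * ((x - z) i * (x - z) i) - 2 * α) := by
    intro i
    rw [iteratedFDeriv_two_apply]
    have := second_barr z α x (EuclideanSpace.single i 1) (EuclideanSpace.single i 1)
    simp only [Matrix.cons_val_zero, Matrix.cons_val_one, Matrix.head_cons]
    rw [this]
    simp [EuclideanSpace.inner_single_right, EuclideanSpace.single_apply,
      starRingEnd_apply, star_trivial]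
    ring
  rw [Finset.sum_congr rfl fun i _ => hterm i]
  have hvv : ⟪x - z, x - z⟫ = ∑ i : Fin n, (x - z) i * (x - z) i := by
    rw [PiLp.inner_apply]
    simp [RCLike.inner_apply, starRingEnd_apply, star_trivial, sq]
  simp only [mul_sub, Finset.sum_sub_distrib, ← Finset.mul_sum, Finset.sum_const,
    Finset.card_univ, Fintype.card_fin, nsmul_eq_mul]
  rw [← hvv]
  ring

lemma lap_add {n : ℕ} {u v : Euc n → ℝ} (hu : ContDiff ℝ 2 u) (hv : ContDiff ℝ 2 v) (x : Euc n) :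
    lap (fun y => u y + v y) x = lap u x + lap v x := by
  unfold lap
  rw [← Finset.sum_add_distrib]
  congr 1; ext i
  rw [show (fun y => u y + v y) = u + v from rfl, iteratedFDeriv_add_apply hu.contDiffAt hv.contDiffAt]
  simp

lemma lap_cmul {n : ℕ} {u : Euc n → ℝ} (hu : ContDiff ℝ 2 u) (c : ℝ) (x : Euc n) :
    lap (fun y => c * u y) x = c * lap u x := by
  unfold lap
  rw [Finset.mul_sum]
  congr 1; ext i
  have : (fun y => c * u y) = fun y => c • u y := by funext y; simp
  rw [this, iteratedFDeriv_const_smul_apply' hu.contDiffAt]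
  simp

lemma lap_const_fn {n : ℕ} (c : ℝ) (x : Euc n) : lap (fun _ => c) x = 0 := by
  unfold lap
  rw [iteratedFDeriv_const_of_ne (by norm_num)]
  simp

lemma gradient_add {n : ℕ} {u v : Euc n → ℝ} (hu : ContDiff ℝ 2 u) (hv : ContDiff ℝ 2 v) (x : Euc n) :
    gradient (fun y => u y + v y) x = gradient u x + gradient v x := by
  unfold gradient
  rw [fderiv_fun_add (hu.differentiable two_ne_zero x) (hv.differentiable two_ne_zero x), map_add]

lemma gradient_cmul {n : ℕ} {u : Euc n → ℝ} (hu : ContDiff ℝ 2 u) (c : ℝ) (x : Euc n) :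
    gradient (fun y => c * u y) x = c • gradient u x := by
  unfold gradient
  have : (fun y => c * u y) = fun y => c • u y := by funext y; simp
  rw [this, fderiv_fun_const_smul (hu.differentiable two_ne_zero x), _root_.map_smul]

lemma gradient_const_fn {n : ℕ} (c : ℝ) (x : Euc n) : gradient (fun _ => c) x = 0 := by
  unfold gradient
  rw [fderiv_fun_const]
  simp

set_option maxHeartbeats 1000000 in
/-- Strong maximum principle for `Δw ≥ B(∇w)` with `w` attaining a global max. -/
lemma strong_max_principle {n : ℕ} {w : Euc n → ℝ} {B : Euc n → Euc n →L[ℝ] ℝ}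
    (hw : ContDiff ℝ 2 w) (hB : Continuous B)
    (hsub : ∀ x, B x (gradient w x) ≤ lap w x)
    {x0 : Euc n} (hmax : IsMaxOn w Set.univ x0) :
    ∀ x, w x = w x0 := by
  set M := w x0 with hM
  by_contra hcon
  push_neg at hcon
  obtain ⟨z, hz⟩ := hcon
  have hzlt : w z < M := lt_of_le_of_ne (hmax (Set.mem_univ z)) hz
  set E := {x : Euc n | w x = M} with hE
  have hEc : IsClosed E := isClosed_eq hw.continuous continuous_const
  have hEne : E.Nonempty := ⟨x0, rfl⟩
  have hzE : z ∉ E := fun h => hz h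
  set r := Metric.infDist z E with hr
  have hrpos : 0 < r := by
    rw [hr, ← hEc.notMem_iff_infDist_pos hEne]
    exact hzE
  obtain ⟨x1, hx1E, hx1d⟩ := hEc.exists_infDist_eq_dist hEne z
  have hdzx1 : dist z x1 = r := hx1d.symm
  have hball : ∀ y ∈ Metric.ball z r, w y < M := by
    intro y hy
    rcases eq_or_ne (w y) M with h | h
    · exfalso
      have : r ≤ dist z y := Metric.infDist_le_dist_of_mem (by exact h)
      rw [Metric.mem_ball, dist_comm] at hy
      linarith
    · exact lt_of_le_of_ne (hmax (Set.mem_univ y)) h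
  have hznx1 : z ≠ x1 := by
    intro h
    rw [h] at hdzx1
    simp at hdzx1
    linarith
  haveI : Nontrivial (Euc n) := ⟨⟨z, x1, hznx1⟩⟩
  -- operator norm bound on closed ball
  obtain ⟨C0, hC0⟩ := (isCompact_closedBall z r).exists_bound_of_continuousOn
    hB.continuousOn
  set C := max C0 0 with hC
  have hCnn : 0 ≤ C := le_max_right _ _
  have hCb : ∀ x ∈ Metric.closedBall z r, ‖B x‖ ≤ C := fun x hx =>
    (hC0 x hx).trans (le_max_left _ _)
  -- choice of α
  set α := (2 * n + 2 * C * r + 1) / r ^ 2 with hα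
  have hαpos : 0 < α := by
    apply div_pos
    · positivity
    · positivity
  have hαkey : α * r ^ 2 - 2 * n - 2 * C * r = 1 := by
    rw [hα, div_mul_cancel₀ _ (pow_pos hrpos 2).ne']
    ring
  -- inner sphere max
  obtain ⟨y1, hy1S, hy1max⟩ := (isCompact_sphere z (r / 2)).exists_isMaxOn
    (NormedSpace.sphere_nonempty.2 (by positivity)) hw.continuous.continuousOn
  have hy1lt : w y1 < M := by
    apply hball
    rw [Metric.mem_ball]
    rw [Metric.mem_sphere] at hy1S
    rw [hy1S]
    linarith
  set δ := M - w y1 with hδ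
  have hδpos : 0 < δ := by simp [hδ]; linarith
  set ε := δ / 2 with hε
  have hεpos : 0 < ε := by positivity
  -- the perturbed function
  set K : ℝ := Real.exp (-α * r ^ 2) with hK
  set v : Euc n → ℝ := fun x => w x + ε * (barr z α x - K) with hv
  have hbarr2 : ContDiff ℝ 2 (fun x : Euc n => barr z α x - K) :=
    (contDiff_barr z α).sub contDiff_const
  have hv2 : ContDiff ℝ 2 v := hw.add (contDiff_const.mul hbarr2)
  have hKpos : 0 < K := Real.exp_pos _
  -- lap and gradient of v
  have hlapv : ∀ x, lap v x = lap w x + ε * lap (barr z α) x := by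
    intro x
    have h1 : lap v x = lap w x + lap (fun y => ε * (barr z α y - K)) x :=
      lap_add hw (contDiff_const.mul hbarr2) x
    rw [h1, lap_cmul hbarr2 ε x, lap_sub (contDiff_barr z α) contDiff_const x,
      lap_const_fn, sub_zero]
  have hgradv : ∀ x, gradient v x = gradient w x + ε • gradient (barr z α) x := by
    intro x
    have h1 : gradient v x = gradient w x + gradient (fun y => ε * (barr z α y - K)) x :=
      gradient_add hw (contDiff_const.mul hbarr2) x
    rw [h1, gradient_cmul hbarr2 ε x, gradient_sub' (contDiff_barr z α) contDiff_const x,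
      gradient_const_fn, sub_zero]
  -- barrier positivity on the annulus
  have hkey : ∀ x : Euc n, r / 2 ≤ dist x z → dist x z ≤ r →
      0 < lap (barr z α) x - B x (gradient (barr z α) x) := by
    intro x hxlo hxhi
    set Q : ℝ := ⟪x - z, x - z⟫ with hQ
    have hQd : Q = dist x z ^ 2 := by
      rw [hQ, real_inner_self_eq_norm_sq, dist_eq_norm]
    have hQlo : r ^ 2 / 4 ≤ Q := by
      rw [hQd]
      have h1 : r / 2 ≤ dist x z := hxlo
      nlinarith [dist_nonneg (x := x) (y := z)]
    have hQhi : Q ≤ r ^ 2 := by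
      rw [hQd]
      nlinarith [dist_nonneg (x := x) (y := z)]
    have hb : |B x (x - z)| ≤ C * r := by
      have h1 : ‖B x (x - z)‖ ≤ ‖B x‖ * ‖x - z‖ := (B x).le_opNorm _
      have h2 : ‖B x‖ ≤ C := hCb x (by rwa [Metric.mem_closedBall])
      have h3 : ‖x - z‖ ≤ r := by rwa [← dist_eq_norm]
      calc |B x (x - z)| = ‖B x (x - z)‖ := rfl
        _ ≤ ‖B x‖ * ‖x - z‖ := h1
        _ ≤ C * r := by
            apply mul_le_mul h2 h3 (norm_nonneg _) hCnn
    have hEpos : 0 < Real.exp (-α * Q) := Real.exp_pos _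
    rw [lap_barr, gradient_barr, _root_.map_smul]
    have hbabs : -(C * r) ≤ B x (x - z) := neg_le_of_abs_le hb
    have hbr : (-2 * α * Real.exp (-α * Q)) • B x (x - z)
        = Real.exp (-α * Q) * (-2 * α * B x (x - z)) := by
      simp [smul_eq_mul]; ring
    rw [hbr]
    have h4 : α ^ 2 * r ^ 2 ≤ 4 * α ^ 2 * Q := by
      have := mul_le_mul_of_nonneg_left hQlo (by positivity : (0:ℝ) ≤ 4 * α ^ 2)
      nlinarith [this]
    have h5 : -(2 * α * (C * r)) ≤ 2 * α * (B x (x - z)) := by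
      have := mul_le_mul_of_nonneg_left hbabs (by positivity : (0:ℝ) ≤ 2 * α)
      nlinarith [this]
    have h6 : α ^ 2 * r ^ 2 - 2 * α * n - 2 * α * (C * r) = α := by
      linear_combination α * hαkey
    have hbracket : α ≤ (4 * α ^ 2 * Q - 2 * α * n) - (-2 * α * B x (x - z)) := by
      linarith
    have : Real.exp (-α * Q) * (4 * α ^ 2 * Q - 2 * α * n)
        - Real.exp (-α * Q) * (-2 * α * B x (x - z))
        = Real.exp (-α * Q) * ((4 * α ^ 2 * Q - 2 * α * n) - (-2 * α * B x (x - z))) := by ring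
    rw [this]
    have hfin : 0 < (4 * α ^ 2 * Q - 2 * α * n) - (-2 * α * B x (x - z)) := by linarith
    positivity
  -- the annulus
  set A : Set (Euc n) := Metric.closedBall z r ∩ (Metric.ball z (r / 2))ᶜ with hA
  have hAcomp : IsCompact A := (isCompact_closedBall z r).inter_right
    Metric.isOpen_ball.isClosed_compl
  have hx1A : x1 ∈ A := by
    constructor
    · rw [Metric.mem_closedBall, dist_comm, hdzx1]
    · intro h
      rw [Metric.mem_ball, dist_comm, hdzx1] at h
      linarith
  obtain ⟨ξ, hξA, hξmax⟩ := hAcomp.exists_isMaxOn ⟨x1, hx1A⟩ hv2.continuous.continuousOn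
  have hbarrx1 : barr z α x1 = K := by
    unfold barr
    rw [hK]
    congr 1
    rw [real_inner_self_eq_norm_sq, ← dist_eq_norm, dist_comm, hdzx1]
  have hvx1 : v x1 = M := by
    rw [hv]
    simp only [hbarrx1, sub_self, mul_zero, add_zero]
    exact hx1E
  have hξM : M ≤ v ξ := by
    rw [← hvx1]
    exact hξmax hx1A
  have hd2 : dist ξ z ≤ r := by
    have := hξA.1
    rwa [Metric.mem_closedBall] at this
  have hd1 : r / 2 ≤ dist ξ z := by
    have := hξA.2
    rw [Set.mem_compl_iff, Metric.mem_ball] at this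
    linarith [not_lt.mp this]
  rcases eq_or_lt_of_le hd2 with hout | hin
  · -- outer sphere : Hopf boundary point argument
    have hQξ : ⟪ξ - z, ξ - z⟫ = r ^ 2 := by
      rw [real_inner_self_eq_norm_sq, ← dist_eq_norm, hout]
    have hbarrξ : barr z α ξ = K := by unfold barr; rw [hK, hQξ]
    have hvξ : v ξ = w ξ := by rw [hv]; simp [hbarrξ]
    have hwξ : w ξ = M := le_antisymm (hmax (Set.mem_univ ξ)) (by rw [← hvξ]; exact hξM)
    have hmaxξ : IsMaxOn w Set.univ ξ := by
      intro y _
      rw [hwξ]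
      exact hmax (Set.mem_univ y)
    have hfdw : fderiv ℝ w ξ = 0 := (hmaxξ.isLocalMax Filter.univ_mem).fderiv_eq_zero
    set d : Euc n := (2⁻¹ : ℝ) • (z - ξ) with hd
    have hseg : segment ℝ ξ (ξ + d) ⊆ A := by
      rw [segment_eq_image]
      rintro y ⟨t, ht, rfl⟩
      have hyz : (1 - t) • ξ + t • (ξ + d) - z = (1 - t * 2⁻¹) • (ξ - z) := by
        rw [hd]
        module
      have hnz : ‖ξ - z‖ = r := by rw [← dist_eq_norm]; exact hout
      have hdist : dist ((1 - t) • ξ + t • (ξ + d)) z = (1 - t * 2⁻¹) * r := by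
        rw [dist_eq_norm, hyz, norm_smul, hnz]
        rw [Real.norm_eq_abs, abs_of_nonneg (by rcases ht with ⟨h1, h2⟩; linarith)]
      constructor
      · rw [Metric.mem_closedBall, hdist]
        rcases ht with ⟨h1, h2⟩
        nlinarith
      · intro hmem
        rw [Metric.mem_ball, hdist] at hmem
        rcases ht with ⟨h1, h2⟩
        nlinarith
    have hcone : d ∈ posTangentConeAt A ξ := mem_posTangentConeAt_of_segment_subset hseg
    have hFv : HasFDerivAt v (fderiv ℝ w ξ + ε • ((-2 * α * Real.exp (-α * ⟪ξ - z, ξ - z⟫)) •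
        innerSL ℝ (ξ - z))) ξ := by
      apply HasFDerivAt.add ((hw.differentiable two_ne_zero ξ).hasFDerivAt)
      have h1 := ((hasFDerivAt_barr z α ξ).sub_const K).const_smul ε
      have : (fun x => ε * (barr z α x - K)) = fun x => ε • (barr z α x - K) := by
        funext y; simp
      rw [this]
      exact h1
    have hder := hξmax.localize.hasFDerivWithinAt_nonpos hFv.hasFDerivWithinAt hcone
    have hcomp : (fderiv ℝ w ξ + ε • ((-2 * α * Real.exp (-α * ⟪ξ - z, ξ - z⟫)) •
        innerSL ℝ (ξ - z))) d = ε * α * K * r ^ 2 := by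
      rw [hfdw]
      simp only [ContinuousLinearMap.add_apply, ContinuousLinearMap.zero_apply,
        ContinuousLinearMap.smul_apply, innerSL_apply_apply, smul_eq_mul, zero_add]
      rw [hQξ, hd]
      have hinner : ⟪ξ - z, (2⁻¹ : ℝ) • (z - ξ)⟫ = -(r ^ 2) * 2⁻¹ := by
        rw [real_inner_smul_right]
        have : z - ξ = -(ξ - z) := by module
        rw [this, inner_neg_right, real_inner_self_eq_norm_sq, ← dist_eq_norm, hout]
        ring
      rw [hinner, hK]
      ring
    rw [hcomp] at hder
    have : 0 < ε * α * K * r ^ 2 := by positivity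
    linarith
  · rcases eq_or_lt_of_le hd1 with hinn | hint
    · -- inner sphere: contradiction with v < M
      have hwy : w ξ ≤ w y1 := hy1max (by rw [Metric.mem_sphere]; exact hinn.symm)
      have hbarrle : barr z α ξ ≤ 1 := by
        unfold barr
        rw [Real.exp_le_one_iff]
        have : (0:ℝ) ≤ ⟪ξ - z, ξ - z⟫ := real_inner_self_nonneg
        nlinarith
      have hvlt : v ξ < M := by
        rw [hv]
        simp only
        have : ε * (barr z α ξ - K) ≤ ε * 1 := by
          apply mul_le_mul_of_nonneg_left _ hεpos.le
          linarith
        calc w ξ + ε * (barr z α ξ - K) ≤ (M - δ) + ε * 1 := by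
              have := hy1lt
              rw [hδ] at *
              linarith
          _ < M := by rw [hε]; linarith
      linarith
    · -- interior point: strict subsolution has no interior max
      have hAnb : A ∈ nhds ξ := by
        have hU : IsOpen (Metric.ball z r ∩ (Metric.closedBall z (r / 2))ᶜ) :=
          Metric.isOpen_ball.inter Metric.isClosed_closedBall.isOpen_compl
        have hξU : ξ ∈ Metric.ball z r ∩ (Metric.closedBall z (r / 2))ᶜ := by
          constructor
          · rw [Metric.mem_ball]; exact hin
          · intro h
            rw [Metric.mem_closedBall] at h
            exact absurd h (not_le.mpr hint)
        have hUA : Metric.ball z r ∩ (Metric.closedBall z (r / 2))ᶜ ⊆ A := by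
          rintro y ⟨h1, h2⟩
          constructor
          · exact Metric.ball_subset_closedBall h1
          · intro hy
            exact h2 (Metric.ball_subset_closedBall hy)
        exact Filter.mem_of_superset (hU.mem_nhds hξU) hUA
      have hloc : IsLocalMax v ξ := hξmax.isLocalMax hAnb
      have hfdv : fderiv ℝ v ξ = 0 := hloc.fderiv_eq_zero
      have hgv : gradient v ξ = 0 := by unfold gradient; rw [hfdv]; simp
      have hlapnp : lap v ξ ≤ 0 := lap_nonpos_at_localmax hv2 hloc
      have hgw : gradient w ξ = -(ε • gradient (barr z α) ξ) := by
        have h := hgradv ξ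
        rw [hgv] at h
        exact eq_neg_of_add_eq_zero_left h.symm
      have hchain : B ξ (gradient w ξ) ≤ lap w ξ := hsub ξ
      have hBw : B ξ (gradient w ξ) = -(ε * B ξ (gradient (barr z α) ξ)) := by
        rw [hgw]
        rw [map_neg, _root_.map_smul]
        simp
      have hlap2 : lap v ξ = lap w ξ + ε * lap (barr z α) ξ := hlapv ξ
      have hk := hkey ξ hd1 hd2
      nlinarith [hεpos, hk, hchain, hBw, hlap2, hlapnp]


end AuxSMP

/-- If for some `θ ∈ I(c)` the cell-problem solution `u_θ` satisfies
`∂_θH(x, ∇u_θ(x), θ) > 0` at some point, then `I(c)` is a singleton. -/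
theorem stmt_17 {n : ℕ}
    (H Hθ : Euc n → Euc n → ℝ → ℝ)
    (hHcont : Continuous fun q : Euc n × Euc n × ℝ => H q.1 q.2.1 q.2.2)
    (hHper : ZnPeriodicH H)
    (hA1 : ∀ (x : Euc n) (θ : ℝ), ConvexOn ℝ Set.univ fun p => H x p θ)
    (hA2 : ∀ (x : Euc n) (θ : ℝ),
      Tendsto (fun p : Euc n => H x p θ / ‖p‖) (comap norm atTop) atTop)
    (hA3deriv : ∀ (x p : Euc n) (θ : ℝ), HasDerivAt (fun t => H x p t) (Hθ x p θ) θ)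
    (hA3cont : Continuous fun q : Euc n × Euc n × ℝ => Hθ q.1 q.2.1 q.2.2)
    (hA3 : ∀ (x p : Euc n) (θ : ℝ), 0 ≤ Hθ x p θ)
    (hA4 : ContDiff ℝ 1 fun q : Euc n × Euc n × ℝ => H q.1 q.2.1 q.2.2)
    (ρstar : ℝ) (hρstar : 0 < ρstar)
    (hA5 : ∀ (x p : Euc n) (θ : ℝ), Hθ x p θ ≤ ρstar)
    (m Λ₀ M₀ : ℝ) (hm : 1 < m) (hΛ₀ : Λ₀ ∈ Set.Ioc (0:ℝ) 1) (hM₀ : 1 ≤ M₀)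
    (hA6 : ∀ (x p : Euc n), Λ₀ * ‖p‖ ^ m - M₀ ≤ H x p 0)
    (hA7 : ∀ ℓ > (0:ℝ), ∃ Λℓ > (0:ℝ), ∃ Mℓ > (0:ℝ), ∀ (x y p : Euc n) (θ : ℝ), |θ| ≤ ℓ →
      |H x p θ - H y p θ| ≤ (Λℓ * ‖p‖ ^ m + Mℓ) * ‖x - y‖)
    (c : ℝ) (uθ : ℝ → Euc n → ℝ)
    (huθ : ∀ θ ∈ {θ : ℝ | effHvisc H θ = c},
      ContDiff ℝ 2 (uθ θ) ∧ ZnPeriodic (uθ θ) ∧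
        ∀ x : Euc n, H x (gradient (uθ θ) x) θ = c + lap (uθ θ) x)
    (hpos : ∃ θ ∈ {θ : ℝ | effHvisc H θ = c}, ∃ x : Euc n,
      0 < Hθ x (gradient (uθ θ) x) θ) :
    ∃ θ₀ : ℝ, {θ : ℝ | effHvisc H θ = c} = {θ₀} := by
  obtain ⟨θs, hθs, xh, hxh⟩ := hpos
  refine ⟨θs, ?_⟩
  -- θ-monotonicity of H
  have hHmono : ∀ (x p : Euc n), Monotone (fun t => H x p t) := fun x p =>
    mono_of_hasDeriv (hA3deriv x p) (hA3 x p)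
  -- key two-solution rigidity
  have key : ∀ θ1 θ2, θ1 ∈ {θ : ℝ | effHvisc H θ = c} → θ2 ∈ {θ : ℝ | effHvisc H θ = c} →
      θ1 < θ2 → ∀ x : Euc n, gradient (uθ θ1) x = gradient (uθ θ2) x ∧
        H x (gradient (uθ θ1) x) θ1 = H x (gradient (uθ θ1) x) θ2 := by
    intro θ1 θ2 h1I h2I h12
    obtain ⟨hu1, hp1, he1⟩ := huθ θ1 h1I
    obtain ⟨hu2, hp2, he2⟩ := huθ θ2 h2I
    set u1 := uθ θ1
    set u2 := uθ θ2
    set g1 : Euc n → Euc n := fun x => gradient u1 x with hg1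
    set g2 : Euc n → Euc n := fun x => gradient u2 x with hg2
    -- construction of the drift coefficient
    set Hf : Euc n × Euc n × ℝ → ℝ := fun q => H q.1 q.2.1 q.2.2 with hHf
    set J : Euc n →L[ℝ] Euc n × Euc n × ℝ :=
      (0 : Euc n →L[ℝ] Euc n).prod
        ((ContinuousLinearMap.id ℝ (Euc n)).prod (0 : Euc n →L[ℝ] ℝ)) with hJ
    have hι : ∀ (x p0 : Euc n) (θ : ℝ),
        HasFDerivAt (fun p : Euc n => ((x, p, θ) : Euc n × Euc n × ℝ)) J p0 := by
      intro x p0 θ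
      exact (hasFDerivAt_const x p0).prodMk ((hasFDerivAt_id p0).prodMk (hasFDerivAt_const θ p0))
    have hJp : ∀ (x p0 : Euc n) (θ : ℝ), HasFDerivAt (fun p => H x p θ)
        ((fderiv ℝ Hf (x, p0, θ)).comp J) p0 := by
      intro x p0 θ
      exact HasFDerivAt.comp p0 ((hA4.differentiable one_ne_zero (x, p0, θ)).hasFDerivAt) (hι x p0 θ)
    set B : Euc n → Euc n →L[ℝ] ℝ := fun x => (fderiv ℝ Hf (x, g1 x, θ1)).comp J with hB
    have hg1cont : Continuous g1 := by
      have h1 : Continuous (fderiv ℝ u1) := hu1.continuous_fderiv two_ne_zero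
      exact (InnerProductSpace.toDual ℝ (Euc n)).symm.continuous.comp h1
    have hBcont : Continuous B := by
      apply Continuous.clm_comp _ continuous_const
      exact (hA4.continuous_fderiv one_ne_zero).comp
        (continuous_id.prodMk (hg1cont.prodMk continuous_const))
    -- the difference and the differential inequality
    set w : Euc n → ℝ := fun x => u2 x - u1 x with hw
    have hw2 : ContDiff ℝ 2 w := hu2.sub hu1
    have hwper : ZnPeriodic w := by
      intro x k
      simp only [hw]
      rw [hp1 x k, hp2 x k]
    have hsub : ∀ x, B x (gradient w x) ≤ lap w x := by
      intro x
      have hgw : gradient w x = g2 x - g1 x := gradient_sub' hu2 hu1 x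
      have hlw : lap w x = lap u2 x - lap u1 x := lap_sub hu2 hu1 x
      have hconv : H x (g1 x) θ1 + B x (g2 x - g1 x) ≤ H x (g2 x) θ1 :=
        convex_grad_ineq (hA1 x θ1) (hJp x (g1 x) θ1) (g2 x)
      have hmono : H x (g2 x) θ1 ≤ H x (g2 x) θ2 := hHmono x (g2 x) h12.le
      have heq1 : H x (g1 x) θ1 = c + lap u1 x := he1 x
      have heq2 : H x (g2 x) θ2 = c + lap u2 x := he2 x
      rw [hgw, hlw]
      linarith
    obtain ⟨x0, hx0⟩ := periodic_max hw2.continuous hwper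
    have hconst := strong_max_principle hw2 hBcont hsub hx0
    -- consequences : equal gradients, equal laplacians
    have hwfun : w = fun _ => w x0 := funext hconst
    have hgzero : ∀ x, gradient w x = 0 := by
      intro x
      rw [hwfun]
      exact gradient_const_fn _ x
    have hlzero : ∀ x, lap w x = 0 := by
      intro x
      rw [hwfun]
      exact lap_const_fn _ x
    intro x
    have hgeq : g1 x = g2 x := by
      have := hgzero x
      rw [gradient_sub' hu2 hu1 x] at this
      have := sub_eq_zero.mp this
      rw [hg1, hg2]
      exact this.symm
    have hleq : lap u1 x = lap u2 x := by
      have := hlzero x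
      rw [lap_sub hu2 hu1 x] at this
      linarith [sub_eq_zero.mp this]
    refine ⟨hgeq, ?_⟩
    have heq1 : H x (g1 x) θ1 = c + lap u1 x := he1 x
    have heq2 : H x (g2 x) θ2 = c + lap u2 x := he2 x
    rw [show gradient u1 x = g1 x from rfl]
    rw [heq1]
    have : H x (g1 x) θ2 = H x (g2 x) θ2 := by rw [hgeq]
    rw [this, heq2, hleq]
  -- conclude using the positivity point
  ext θ
  simp only [Set.mem_setOf_eq, Set.mem_singleton_iff]
  constructor
  · intro hθI
    by_contra hne
    rcases lt_or_gt_of_ne hne with hlt | hgt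
    · -- θ < θs
      obtain ⟨hgeq, hHeq⟩ := key θ θs hθI hθs hlt xh
      have hder := hA3deriv xh (gradient (uθ θ) xh) -- family
      have hzero : Hθ xh (gradient (uθ θ) xh) θs = 0 :=
        endpoint_deriv_zero hlt (hHmono xh (gradient (uθ θ) xh)) hHeq (Or.inr rfl)
          (hA3deriv xh (gradient (uθ θ) xh) θs)
      rw [hgeq] at hzero
      rw [hzero] at hxh
      exact lt_irrefl 0 hxh
    · -- θs < θ
      obtain ⟨hgeq, hHeq⟩ := key θs θ hθs hθI hgt xh
      have hzero : Hθ xh (gradient (uθ θs) xh) θs = 0 :=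
        endpoint_deriv_zero hgt (hHmono xh (gradient (uθ θs) xh)) hHeq (Or.inl rfl)
          (hA3deriv xh (gradient (uθ θs) xh) θs)
      rw [hzero] at hxh
      exact lt_irrefl 0 hxh
  · intro h
    rw [h]
    exact hθs
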